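/- Lower bound for the C_p functional, 1 < p < 2 (Lemma 2.11): Let 1 < p < 2 ≤ n. Then for all ξ, η ∈ ℂⁿ, C_p(ξ,η) ≥ c₂(p) · |η|² / (|ξ| + |ξ−η|)^{2−p}, where c₂(p) := inf_{s²+t²>0} [ (t²+s²+2s+1)^{p/2} − 1 − ps ] / [ (√(t²+s²+2s+1) + 1)^{p−2} (t²+s²) ]; moreover c₂(p) ∈ (0, p(p−1)/2^{p−1}]. -/

import Mathlib

/-- The functional `C_p(ξ,η) = |ξ|^p - |ξ-η|^p - p|ξ-η|^{p-2} Re⟨ξ-η, η⟩` on `ℂⁿ`. -/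
noncomputable def Cp (n : ℕ) (p : ℝ) (ξ η : EuclideanSpace ℂ (Fin n)) : ℝ :=
  ‖ξ‖ ^ p - ‖ξ - η‖ ^ p - p * ‖ξ - η‖ ^ (p - 2) * (inner ℂ (ξ - η) η : ℂ).re

/-- The constant `c₂(p)`: the infimum over `s² + t² > 0` of
`[(t²+s²+2s+1)^{p/2} - 1 - ps] / [(√(t²+s²+2s+1) + 1)^{p-2}(t²+s²)]`. -/
noncomputable def c2 (p : ℝ) : ℝ :=
  sInf { r : ℝ | ∃ s t : ℝ, 0 < s ^ 2 + t ^ 2 ∧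
    r = ((t ^ 2 + s ^ 2 + 2 * s + 1) ^ (p / 2) - 1 - p * s) /
        ((Real.sqrt (t ^ 2 + s ^ 2 + 2 * s + 1) + 1) ^ (p - 2) * (t ^ 2 + s ^ 2)) }

/-! Scaling `ξ - η` to a unit vector, `η` becomes the point `(s, t)` of the plane with
`s = Re⟨ξ - η, η⟩ / |ξ - η|²`, and the inequality becomes the statement that `c₂(p)` is the
infimum of the quotient at `(s, t)`. The quotient is bounded below by `p(p-1)/4` thanks to the
one-dimensional estimate `u^p - 1 - p(u-1) ≥ p(p-1)/4 · (u-1)² (u+1)^{p-2}`, which follows from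
tangent-line inequalities for `x ↦ x^p` at the midpoint `(u+1)/2`. The upper bound comes from the
value `p - 1` of the quotient at `(s, t) = (-1, 0)` together with `2^{p-1} ≤ p`. -/

open Real

lemma tangent_le_rpow_of_one_le {p x m : ℝ} (hp : 1 ≤ p) (hx : 0 ≤ x) (hm : 0 < m) :
    m ^ p + p * m ^ (p - 1) * (x - m) ≤ x ^ p := by
  have h := one_add_mul_self_le_rpow_one_add
    (show -1 ≤ x / m - 1 by linarith [div_nonneg hx hm.le]) hp
  rw [add_sub_cancel, div_rpow hx hm.le, le_div_iff₀ (rpow_pos_of_pos hm p)] at h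
  calc m ^ p + p * m ^ (p - 1) * (x - m) = (1 + p * (x / m - 1)) * m ^ p := by
        rw [rpow_sub_one hm.ne']; field_simp
    _ ≤ x ^ p := h

lemma rpow_le_tangent_of_le_one {q x m : ℝ} (hq0 : 0 ≤ q) (hq1 : q ≤ 1) (hx : 0 ≤ x)
    (hm : 0 < m) : x ^ q ≤ m ^ q + q * m ^ (q - 1) * (x - m) := by
  have h := rpow_one_add_le_one_add_mul_self
    (show -1 ≤ x / m - 1 by linarith [div_nonneg hx hm.le]) hq0 hq1
  rw [add_sub_cancel, div_rpow hx hm.le, div_le_iff₀ (rpow_pos_of_pos hm q)] at h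
  calc x ^ q ≤ (1 + q * (x / m - 1)) * m ^ q := h
    _ = m ^ q + q * m ^ (q - 1) * (x - m) := by
        rw [rpow_sub_one hm.ne']; field_simp

/-- A mean value bound: `m ^ q - 1 = q ζ ^ (q - 1) (m - 1)` for some `ζ` between `1` and `m`. -/
lemma mul_sq_mul_max_rpow_le {q m : ℝ} (hq0 : 0 ≤ q) (hq1 : q ≤ 1) (hm : 0 < m) :
    q * (m - 1) ^ 2 * max m 1 ^ (q - 1) ≤ (m - 1) * (m ^ q - 1) := by
  rcases le_total 1 m with h1m | hm1
  · have h := rpow_le_tangent_of_le_one hq0 hq1 zero_le_one hm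
    rw [one_rpow] at h
    rw [max_eq_left h1m]
    nlinarith [mul_le_mul_of_nonneg_left h (sub_nonneg.2 h1m)]
  · have h := rpow_le_tangent_of_le_one hq0 hq1 hm.le one_pos
    rw [one_rpow, one_rpow] at h
    rw [max_eq_right hm1, one_rpow]
    nlinarith [mul_le_mul_of_nonneg_left h (sub_nonneg.2 hm1)]

/-- The midpoint `m = (u + 1) / 2` splits `u ^ p - 1 - p (u - 1)` into two tangent-line gaps. -/
lemma mul_sq_mul_rpow_le_rpow_sub_one_sub_mul {p u : ℝ} (hp1 : 1 ≤ p) (hp2 : p ≤ 2)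
    (hu : 0 ≤ u) :
    p * (p - 1) / 4 * (u - 1) ^ 2 * (u + 1) ^ (p - 2) ≤ u ^ p - 1 - p * (u - 1) := by
  set m := (u + 1) / 2 with hm_def
  have hm : 0 < m := by positivity
  have h_um := tangent_le_rpow_of_one_le hp1 hu hm
  have h_m1 := tangent_le_rpow_of_one_le hp1 hm.le one_pos
  rw [one_rpow, one_rpow] at h_m1
  have h_mv := mul_sq_mul_max_rpow_le (sub_nonneg.2 hp1) (by linarith) hm
  rw [show p - 1 - 1 = p - 2 by ring] at h_mv
  have h_max : (u + 1) ^ (p - 2) ≤ max m 1 ^ (p - 2) :=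
    rpow_le_rpow_of_nonpos (by positivity) (max_le (by linarith) (by linarith)) (by linarith)
  calc p * (p - 1) / 4 * (u - 1) ^ 2 * (u + 1) ^ (p - 2)
      = p * ((p - 1) * (m - 1) ^ 2 * (u + 1) ^ (p - 2)) := by rw [hm_def]; ring
    _ ≤ p * ((m - 1) * (m ^ (p - 1) - 1)) := by
        refine mul_le_mul_of_nonneg_left ?_ (by linarith)
        exact (mul_le_mul_of_nonneg_left h_max (by nlinarith)).trans h_mv
    _ ≤ u ^ p - 1 - p * (u - 1) := by
        linear_combination h_um + h_m1 + 2 * p * (m ^ (p - 1) - 1) * hm_def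

noncomputable def c2Quotient (p s t : ℝ) : ℝ :=
  ((t ^ 2 + s ^ 2 + 2 * s + 1) ^ (p / 2) - 1 - p * s) /
    ((√(t ^ 2 + s ^ 2 + 2 * s + 1) + 1) ^ (p - 2) * (t ^ 2 + s ^ 2))

lemma c2Quotient_neg_one_zero {p : ℝ} (hp : p ≠ 0) : c2Quotient p (-1) 0 = p - 1 := by
  norm_num [c2Quotient, zero_rpow (div_ne_zero hp two_ne_zero)]
  ring

/-- With `u = √((s + 1)² + t²)`, the gap `s² + t² - (u - 1)² = 2 (u - 1 - s)` is nonnegative,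
and it is paid for by the linear term `p (u - 1 - s)`. -/
lemma mul_sub_one_div_four_le_c2Quotient {p s t : ℝ} (hp1 : 1 ≤ p) (hp2 : p ≤ 2)
    (hst : 0 < s ^ 2 + t ^ 2) : p * (p - 1) / 4 ≤ c2Quotient p s t := by
  have hA : 0 ≤ t ^ 2 + s ^ 2 + 2 * s + 1 := by nlinarith [sq_nonneg (s + 1), sq_nonneg t]
  set u := √(t ^ 2 + s ^ 2 + 2 * s + 1) with hu_def
  have hu : 0 ≤ u := sqrt_nonneg _
  have hu2 : u ^ 2 = t ^ 2 + s ^ 2 + 2 * s + 1 := sq_sqrt hA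
  have hsu : s + 1 ≤ u := by nlinarith [sq_nonneg t]
  have hP0 : 0 < (u + 1) ^ (p - 2) := rpow_pos_of_pos (by linarith) _
  have hP1 : (u + 1) ^ (p - 2) ≤ 1 := rpow_le_one_of_one_le_of_nonpos (by linarith) (by linarith)
  have h_coef : p * (p - 1) / 4 * (u + 1) ^ (p - 2) ≤ p / 2 := by
    nlinarith [mul_le_mul_of_nonneg_left hP1 (by nlinarith : 0 ≤ p * (p - 1) / 4)]
  have h_gap := mul_le_mul_of_nonneg_right h_coef (sub_nonneg.2 hsu)
  have h_phi := mul_sq_mul_rpow_le_rpow_sub_one_sub_mul hp1 hp2 hu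
  rw [c2Quotient, ← hu_def, rpow_div_two_eq_sqrt p hA, ← hu_def,
    le_div_iff₀ (mul_pos hP0 (by linarith))]
  linear_combination h_phi + 2 * h_gap - p * (p - 1) / 4 * (u + 1) ^ (p - 2) * hu2

lemma c2_le_c2Quotient {p s t : ℝ} (hp1 : 1 ≤ p) (hp2 : p ≤ 2) (hst : 0 < s ^ 2 + t ^ 2) :
    c2 p ≤ c2Quotient p s t :=
  csInf_le ⟨p * (p - 1) / 4, fun _ ⟨_, _, hst, hr⟩ =>
    hr ▸ mul_sub_one_div_four_le_c2Quotient hp1 hp2 hst⟩ ⟨s, t, hst, rfl⟩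

lemma c2_le_sub_one {p : ℝ} (hp1 : 1 ≤ p) (hp2 : p ≤ 2) : c2 p ≤ p - 1 :=
  c2Quotient_neg_one_zero (by linarith) ▸ c2_le_c2Quotient hp1 hp2 (by norm_num)

lemma mul_sub_one_div_four_le_c2 {p : ℝ} (hp1 : 1 ≤ p) (hp2 : p ≤ 2) :
    p * (p - 1) / 4 ≤ c2 p :=
  le_csInf ⟨_, -1, 0, by norm_num, rfl⟩ fun _ ⟨_, _, hst, hr⟩ =>
    hr ▸ mul_sub_one_div_four_le_c2Quotient hp1 hp2 hst

lemma two_rpow_sub_one_le {p : ℝ} (hp1 : 1 ≤ p) (hp2 : p ≤ 2) : (2 : ℝ) ^ (p - 1) ≤ p := by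
  have h := rpow_one_add_le_one_add_mul_self (s := 1) (by norm_num) (sub_nonneg.2 hp1)
    (by linarith)
  norm_num at h
  linarith

/-- Rescaling by `a`: the infimum defining `c2` is tested at `s = R / a²`,
`t = √((h / a)² - s²)`, where `t² + s² + 2s + 1 = (b / a)²`. -/
lemma c2_mul_sq_div_le_of_pos {p a b h R : ℝ} (hp1 : 1 ≤ p) (hp2 : p ≤ 2) (ha : 0 < a)
    (hh : 0 < h) (hb : 0 ≤ b) (hb2 : b ^ 2 = a ^ 2 + 2 * R + h ^ 2) (hR : |R| ≤ a * h) :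
    c2 p * h ^ 2 / (b + a) ^ (2 - p) ≤ b ^ p - a ^ p - p * a ^ (p - 2) * R := by
  obtain ⟨s, rfl⟩ : ∃ s, R = a ^ 2 * s := ⟨R / a ^ 2, by field_simp⟩
  have hs : s ^ 2 ≤ (h / a) ^ 2 := by
    rw [abs_mul, abs_of_pos (by positivity), sq, mul_assoc] at hR
    rw [div_pow, le_div_iff₀ (by positivity)]
    calc s ^ 2 * a ^ 2 = (a * |s|) ^ 2 := by rw [mul_pow, sq_abs]; ring
      _ ≤ h ^ 2 := pow_le_pow_left₀ (by positivity) (le_of_mul_le_mul_left hR ha) 2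
  set t := √((h / a) ^ 2 - s ^ 2)
  have hts : t ^ 2 + s ^ 2 = (h / a) ^ 2 := by rw [sq_sqrt (sub_nonneg.2 hs)]; ring
  have hba : t ^ 2 + s ^ 2 + 2 * s + 1 = (b / a) ^ 2 := by
    rw [hts]; field_simp; linear_combination -hb2
  have key := c2_le_c2Quotient hp1 hp2 (s := s) (t := t) (by rw [add_comm, hts]; positivity)
  rw [c2Quotient, hba, hts, rpow_div_two_eq_sqrt _ (sq_nonneg _), sqrt_sq (by positivity),
    le_div_iff₀ (by positivity), div_add_one ha.ne', div_rpow hb ha.le,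
    div_rpow (by positivity) ha.le] at key
  have ha_p : a ^ p = a ^ (p - 2) * a ^ 2 := by
    rw [← rpow_add_natCast ha.ne']; norm_num
  rw [show 2 - p = -(p - 2) by ring, rpow_neg (by positivity), div_inv_eq_mul, ha_p]
  rw [ha_p] at key
  field_simp at key
  linear_combination key

lemma c2_mul_sq_div_le {p a b h R : ℝ} (hp1 : 1 ≤ p) (hp2 : p ≤ 2) (ha : 0 ≤ a)
    (hh : 0 ≤ h) (hb : 0 ≤ b) (hb2 : b ^ 2 = a ^ 2 + 2 * R + h ^ 2) (hR : |R| ≤ a * h) :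
    c2 p * h ^ 2 / (b + a) ^ (2 - p) ≤ b ^ p - a ^ p - p * a ^ (p - 2) * R := by
  rcases ha.eq_or_lt with rfl | ha
  · obtain rfl : R = 0 := abs_nonpos_iff.1 (by simpa using hR)
    obtain rfl : b = h := by nlinarith
    rcases hh.eq_or_lt with rfl | hh
    · simp
    rw [zero_rpow (by linarith), add_zero, mul_div_assoc, ← rpow_natCast, ← rpow_sub hh]
    norm_num
    nlinarith [c2_le_sub_one hp1 hp2, rpow_pos_of_pos hh p]
  rcases hh.eq_or_lt with rfl | hh
  · obtain rfl : R = 0 := abs_nonpos_iff.1 (by simpa using hR)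
    obtain rfl : b = a := by nlinarith
    simp
  exact c2_mul_sq_div_le_of_pos hp1 hp2 ha hh hb hb2 hR

theorem Cp_lower_bound_small_p_general {n : ℕ} (p : ℝ) (hp1 : 1 < p) (hp2 : p < 2) :
    (∀ ξ η : EuclideanSpace ℂ (Fin n),
      Cp n p ξ η ≥ c2 p * ‖η‖ ^ 2 / (‖ξ‖ + ‖ξ - η‖) ^ (2 - p))
      ∧ 0 < c2 p ∧ c2 p ≤ p * (p - 1) / (2 : ℝ) ^ (p - 1) := by
  refine ⟨fun ξ η => ?_, ?_, ?_⟩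
  · have hb2 : ‖ξ‖ ^ 2 = ‖ξ - η‖ ^ 2 + 2 * (inner ℂ (ξ - η) η : ℂ).re + ‖η‖ ^ 2 := by
      simpa only [sub_add_cancel, RCLike.re_to_complex] using norm_add_sq (𝕜 := ℂ) (ξ - η) η
    exact c2_mul_sq_div_le hp1.le hp2.le (norm_nonneg _) (norm_nonneg _) (norm_nonneg _) hb2
      ((Complex.abs_re_le_norm _).trans (norm_inner_le_norm _ _))
  · have := sub_pos.2 hp1
    exact lt_of_lt_of_le (by positivity) (mul_sub_one_div_four_le_c2 hp1.le hp2.le)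
  · rw [le_div_iff₀ (by positivity)]
    nlinarith [c2_le_sub_one hp1.le hp2.le, two_rpow_sub_one_le hp1.le hp2.le,
      rpow_pos_of_pos two_pos (p - 1)]

/-- Lower bound for the `C_p` functional for `1 < p < 2 ≤ n`:
`C_p(ξ,η) ≥ c₂(p) |η|² / (|ξ| + |ξ-η|)^{2-p}` for all `ξ, η ∈ ℂⁿ` (with the right-hand side
interpreted as `0` when `ξ = η = 0`), and `c₂(p) ∈ (0, p(p-1)/2^{p-1}]`. -/
theorem Cp_lower_bound_small_p {n : ℕ} (p : ℝ) (hp1 : 1 < p) (hp2 : p < 2) (hn : 2 ≤ n) :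
    (∀ ξ η : EuclideanSpace ℂ (Fin n),
      Cp n p ξ η ≥ c2 p * ‖η‖ ^ 2 / (‖ξ‖ + ‖ξ - η‖) ^ (2 - p))
      ∧ 0 < c2 p ∧ c2 p ≤ p * (p - 1) / (2 : ℝ) ^ (p - 1) :=
  Cp_lower_bound_small_p_general p hp1 hp2
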